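/- With the linear forms ℓ_1,…,ℓ_r, the set S, and the sets U_j(α,β), U_j(α), U(α) as in the context, let p ∉ S be a prime, ψ a standard additive character of ℚ_p, fix 1 ≤ k ≤ r, and let a = (a_1,a_2) ∈ ℤ² \ {0} be proportional to (a_k,b_k) (i.e. a_1 b_k = a_2 a_k) with p not dividing gcd(a_1,a_2). Then: (i) for every j ≠ k and all α > β ≥ 1, ∫_{U_j(α,β)} ψ_a dμ = 0; (ii) for every j ≠ k, ∫_{U_j(α)} ψ_a dμ = −1 if α = 1 and = 0 if α ≥ 2; (iii) ∫_{U(α)} ψ_a dμ = −(p+1−r) if α = 1 and = 0 if α ≥ 2. -/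

import Mathlib

open MeasureTheory

noncomputable instance (p : ℕ) [Fact p.Prime] : MeasurableSpace ℚ_[p] := borel _
instance (p : ℕ) [Fact p.Prime] : BorelSpace ℚ_[p] := ⟨rfl⟩

/-- `U_j(α,β) = {x ∈ ℚ_p² : ‖x‖_p = p^α, |a x₁ + b x₂|_p = p^(α-β)}`. -/
def Uab (p : ℕ) [Fact p.Prime] (a b : ℤ) (α β : ℕ) : Set (ℚ_[p] × ℚ_[p]) :=
  {x | max ‖x.1‖ ‖x.2‖ = (p : ℝ) ^ α ∧
    ‖(a : ℚ_[p]) * x.1 + (b : ℚ_[p]) * x.2‖ = (p : ℝ) ^ (α - β)}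

/-- `U_j(α) = {x ∈ ℚ_p² : ‖x‖_p = p^α, |a x₁ + b x₂|_p ≤ 1}`. -/
def Ua (p : ℕ) [Fact p.Prime] (a b : ℤ) (α : ℕ) : Set (ℚ_[p] × ℚ_[p]) :=
  {x | max ‖x.1‖ ‖x.2‖ = (p : ℝ) ^ α ∧ ‖(a : ℚ_[p]) * x.1 + (b : ℚ_[p]) * x.2‖ ≤ 1}

/-- `U(α) = {x ∈ ℚ_p² : ‖x‖_p = p^α, |ℓ_i(x)|_p = p^α for all i}`. -/
def Utot (p : ℕ) [Fact p.Prime] {r : ℕ} (a b : Fin r → ℤ) (α : ℕ) :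
    Set (ℚ_[p] × ℚ_[p]) :=
  {x | max ‖x.1‖ ‖x.2‖ = (p : ℝ) ^ α ∧
    ∀ i, ‖(a i : ℚ_[p]) * x.1 + (b i : ℚ_[p]) * x.2‖ = (p : ℝ) ^ α}

/-!
Write `c = m • (a_k, b_k)` with `p ∤ m`; then `ψ_c(x) = χ(ℓ_k(x))` for the standard character
`χ(v) = ψ(m v)`. For `j ≠ k`, and for a Bezout complement `ℓ'` of `ℓ_k`, the integral matrix with
rows `ℓ_j, ℓ_k` (resp. `ℓ', ℓ_k`) is invertible over `ℤ_p`, hence an isometry of `ℚ_p²`, and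
therefore preserves Haar measure. In the coordinates `(u, v) = (ℓ_j x, ℓ_k x)` the sets
`U_j(α, β)` and `U_j(α)` become products `A × {|v| = p^α}`, so the integral is
`vol(A) · ∫_{|v| = p^α} χ`, which is `-vol(A)` for `α = 1` and `0` for `α ≥ 2`: by translation
invariance `∫_{|v| ≤ p^n} χ` is `1` for `n = 0` and vanishes for `n ≥ 1`. Finally `U(α)` is the
sphere `‖x‖ = p^α` minus the pairwise disjoint pieces where `|ℓ_i(x)| < p^α`; the sphere
contributes `-1`, the piece `i = k` contributes `vol{|u| = p} = p - 1`, and each of the other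
`r - 1` pieces contributes `-1`.
-/

open Metric Set TopologicalSpace Measure

section Haar

variable (G : Type*) [NormedAddCommGroup G] [ProperSpace G]

def unitClosedBall : PositiveCompacts G where
  carrier := closedBall 0 1
  isCompact' := isCompact_closedBall 0 1
  interior_nonempty' := ⟨0, ball_subset_interior_closedBall (mem_ball_self one_pos)⟩

variable {G} [MeasurableSpace G] [BorelSpace G]

theorem Measure.IsAddHaarMeasure.ext_closedBall {μ ν : Measure G} [μ.IsAddHaarMeasure]
    [ν.IsAddHaarMeasure] (h : μ (closedBall 0 1) = ν (closedBall 0 1)) : μ = ν := by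
  rw [addHaarMeasure_unique μ (unitClosedBall G), addHaarMeasure_unique ν (unitClosedBall G)]
  exact congrArg (· • _) h

theorem LinearIsometryEquiv.measurePreserving_of_isAddHaarMeasure {𝕜 : Type*}
    [NontriviallyNormedField 𝕜] [NormedSpace 𝕜 G] (e : G ≃ₗᵢ[𝕜] G) (μ : Measure G)
    [μ.IsAddHaarMeasure] : MeasurePreserving e μ μ := by
  have : (μ.map e).IsAddHaarMeasure := e.toContinuousLinearEquiv.isAddHaarMeasure_map μ
  refine ⟨e.continuous.measurable, IsAddHaarMeasure.ext_closedBall ?_⟩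
  rw [map_apply e.continuous.measurable measurableSet_closedBall, e.preimage_closedBall, map_zero]

end Haar

theorem setIntegral_prod_fun_snd {α β E : Type*} [MeasurableSpace α] [MeasurableSpace β]
    [NormedAddCommGroup E] [NormedSpace ℝ E] (μ : Measure α) (ν : Measure β) [SFinite μ]
    [SFinite ν] (F : β → E) (s : Set α) (t : Set β) :
    ∫ z in s ×ˢ t, F z.2 ∂μ.prod ν = μ.real s • ∫ y in t, F y ∂ν := by
  rw [← prod_restrict, integral_fun_snd, measureReal_restrict_apply_univ]

theorem setIntegral_closedBall_eq_zero_of_ne_one {G : Type*} [NormedAddCommGroup G]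
    [IsUltrametricDist G] [MeasurableSpace G] [BorelSpace G] (μ : Measure G)
    [μ.IsAddLeftInvariant] {χ : G → ℂ} (hχ : ∀ x y, χ (x + y) = χ x * χ y) {t : G} {R : ℝ}
    (ht : ‖t‖ ≤ R) (hχt : χ t ≠ 1) : ∫ v in closedBall 0 R, χ v ∂μ = 0 := by
  have hpre : (t + ·) ⁻¹' closedBall 0 R = closedBall 0 R := by
    rw [preimage_add_closedBall, zero_sub, ← IsUltrametricDist.closedBall_eq_of_mem]
    rwa [mem_closedBall_zero_iff, norm_neg]
  have key : ∫ v in closedBall 0 R, χ v ∂μ = χ t * ∫ v in closedBall 0 R, χ v ∂μ := calc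
    _ = ∫ v in (t + ·) ⁻¹' closedBall 0 R, χ (t + v) ∂μ :=
      ((measurePreserving_add_left μ t).setIntegral_preimage_emb
        (measurableEmbedding_addLeft t) χ _).symm
    _ = χ t * ∫ v in closedBall 0 R, χ v ∂μ := by
      simp only [hpre, hχ, integral_const_mul]
  have : (1 - χ t) * ∫ v in closedBall 0 R, χ v ∂μ = 0 := by
    rw [sub_mul, one_mul, ← key, sub_self]
  exact (mul_eq_zero.1 this).resolve_left (sub_ne_zero.2 hχt.symm)

theorem max_eq_iff_right_of_lt {a b c : ℝ} (h : a < c) : max a b = c ↔ b = c := by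
  constructor
  · intro hm
    rcases max_choice a b with h' | h'
    · exact absurd (h'.symm.trans hm) h.ne
    · exact h'.symm.trans hm
  · rintro rfl
    exact max_eq_right h.le

section Shapes

variable {G E F : Type*} [SeminormedAddGroup G] [SeminormedAddGroup E] [SeminormedAddGroup F]
  {T : G → E × F} (hT : ∀ x, ‖T x‖ = ‖x‖) {R : ℝ}
include hT

theorem setOf_norm_eq_and_fst_mem {s : Set E} (hs : s ⊆ ball 0 R) :
    {x | ‖x‖ = R ∧ (T x).1 ∈ s} = T ⁻¹' (s ×ˢ sphere 0 R) := by
  ext x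
  simp only [mem_ofPred_eq, mem_preimage, mem_prod, mem_sphere_zero_iff_norm, ← hT x,
    Prod.norm_def]
  exact ⟨fun ⟨hx, hs'⟩ ↦ ⟨hs', (max_eq_iff_right_of_lt (mem_ball_zero_iff.1 (hs hs'))).1 hx⟩,
    fun ⟨hs', hx⟩ ↦ ⟨(max_eq_iff_right_of_lt (mem_ball_zero_iff.1 (hs hs'))).2 hx, hs'⟩⟩

theorem setOf_norm_eq_and_snd_mem {s : Set F} (hs : s ⊆ ball 0 R) :
    {x | ‖x‖ = R ∧ (T x).2 ∈ s} = T ⁻¹' (sphere 0 R ×ˢ s) := by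
  ext x
  simp only [mem_ofPred_eq, mem_preimage, mem_prod, mem_sphere_zero_iff_norm, ← hT x,
    Prod.norm_def, max_comm ‖(T x).1‖]
  exact ⟨fun ⟨hx, hs'⟩ ↦ ⟨(max_eq_iff_right_of_lt (mem_ball_zero_iff.1 (hs hs'))).1 hx, hs'⟩,
    fun ⟨hx, hs'⟩ ↦ ⟨(max_eq_iff_right_of_lt (mem_ball_zero_iff.1 (hs hs'))).2 hx, hs'⟩⟩

end Shapes

theorem IsCoprime.exists_eq_mul_of_mul_eq_mul {R : Type*} [CommRing R] {a b c₁ c₂ : R}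
    (hab : IsCoprime a b) (h : c₁ * b = c₂ * a) : ∃ m, c₁ = m * a ∧ c₂ = m * b := by
  obtain ⟨u, v, huv⟩ := hab
  exact ⟨c₁ * u + c₂ * v, by linear_combination v * h - c₁ * huv,
    by linear_combination -u * h - c₂ * huv⟩

namespace Padic

variable {p : ℕ} [Fact p.Prime]

theorem one_lt_natCast_p : (1 : ℝ) < p := by exact_mod_cast (Fact.out : p.Prime).one_lt

theorem norm_intCast_eq_one_of_not_dvd {z : ℤ} (h : ¬ (p : ℤ) ∣ z) : ‖(z : ℚ_[p])‖ = 1 :=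
  (norm_int_le_one z).antisymm (not_lt.1 (mt norm_intCast_lt_one_iff.1 h))

theorem ball_pow_succ (n : ℕ) :
    ball (0 : ℚ_[p]) ((p : ℝ) ^ (n + 1)) = closedBall 0 ((p : ℝ) ^ n) := by
  ext v
  simp only [mem_ball_zero_iff, mem_closedBall_zero_iff]
  exact_mod_cast (norm_le_pow_iff_norm_lt_pow_add_one v n).symm

theorem norm_intCast_mul_add_le (e f : ℤ) (x : ℚ_[p] × ℚ_[p]) :
    ‖(e : ℚ_[p]) * x.1 + (f : ℚ_[p]) * x.2‖ ≤ ‖x‖ := by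
  refine (nonarchimedean _ _).trans (max_le_max ?_ ?_) <;> rw [norm_mul]
  · exact mul_le_of_le_one_left (norm_nonneg _) (norm_int_le_one e)
  · exact mul_le_of_le_one_left (norm_nonneg _) (norm_int_le_one f)

variable (p) in
noncomputable def intLinearMap (e f g h : ℤ) : (ℚ_[p] × ℚ_[p]) →ₗ[ℚ_[p]] ℚ_[p] × ℚ_[p] where
  toFun x := ((e : ℚ_[p]) * x.1 + (f : ℚ_[p]) * x.2, (g : ℚ_[p]) * x.1 + (h : ℚ_[p]) * x.2)
  map_add' x y := by ext <;> simp only [Prod.fst_add, Prod.snd_add] <;> ring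
  map_smul' c x := by
    ext <;> simp only [Prod.smul_fst, Prod.smul_snd, smul_eq_mul, RingHom.id_apply] <;> ring

theorem norm_intLinearMap_le (e f g h : ℤ) (x : ℚ_[p] × ℚ_[p]) :
    ‖intLinearMap p e f g h x‖ ≤ ‖x‖ :=
  max_le (norm_intCast_mul_add_le e f x) (norm_intCast_mul_add_le g h x)

theorem intLinearMap_adjugate_apply (e f g h : ℤ) (x : ℚ_[p] × ℚ_[p]) :
    intLinearMap p h (-f) (-g) e (intLinearMap p e f g h x) =
      ((e * h - g * f : ℤ) : ℚ_[p]) • x := by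
  ext <;>
    simp only [intLinearMap, LinearMap.coe_mk, AddHom.coe_mk, Prod.smul_fst, Prod.smul_snd,
      smul_eq_mul, Int.cast_neg, Int.cast_sub, Int.cast_mul] <;>
    ring

theorem norm_intLinearMap {e f g h : ℤ} (hd : ¬ (p : ℤ) ∣ e * h - g * f) (x : ℚ_[p] × ℚ_[p]) :
    ‖intLinearMap p e f g h x‖ = ‖x‖ := by
  refine (norm_intLinearMap_le e f g h x).antisymm ?_
  calc ‖x‖ = ‖((e * h - g * f : ℤ) : ℚ_[p]) • x‖ := by
        rw [norm_smul, norm_intCast_eq_one_of_not_dvd hd, one_mul]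
    _ = ‖intLinearMap p h (-f) (-g) e (intLinearMap p e f g h x)‖ := by
        rw [intLinearMap_adjugate_apply]
    _ ≤ ‖intLinearMap p e f g h x‖ := norm_intLinearMap_le _ _ _ _ _

variable (p) in
noncomputable def unimodularIsometry {e f g h : ℤ} (hd : ¬ (p : ℤ) ∣ e * h - g * f) :
    (ℚ_[p] × ℚ_[p]) ≃ₗᵢ[ℚ_[p]] ℚ_[p] × ℚ_[p] :=
  LinearIsometry.toLinearIsometryEquiv
    { intLinearMap p e f g h with norm_map' := norm_intLinearMap hd } rfl

theorem unimodularIsometry_apply {e f g h : ℤ} (hd : ¬ (p : ℤ) ∣ e * h - g * f)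
    (x : ℚ_[p] × ℚ_[p]) : unimodularIsometry p hd x =
      ((e : ℚ_[p]) * x.1 + (f : ℚ_[p]) * x.2, (g : ℚ_[p]) * x.1 + (h : ℚ_[p]) * x.2) := rfl

variable (p) in
structure IsStandardAddChar (ψ : ℚ_[p] → ℂ) : Prop where
  continuous : Continuous ψ
  map_add : ∀ x y : ℚ_[p], ψ (x + y) = ψ x * ψ y
  eq_one_of_norm_le_one : ∀ x : ℚ_[p], ‖x‖ ≤ 1 → ψ x = 1
  exists_ne_one : ∃ x : ℚ_[p], ‖x‖ ≤ p ∧ ψ x ≠ 1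

theorem IsStandardAddChar.comp_intCast_mul {ψ : ℚ_[p] → ℂ} (hψ : IsStandardAddChar p ψ)
    {m : ℤ} (hm : ¬ (p : ℤ) ∣ m) : IsStandardAddChar p (fun v ↦ ψ (m * v)) where
  continuous := hψ.continuous.comp (continuous_const_mul _)
  map_add x y := by simp only [mul_add, hψ.map_add]
  eq_one_of_norm_le_one x hx := hψ.eq_one_of_norm_le_one _ <| by
    rw [norm_mul]; exact mul_le_one₀ (norm_int_le_one m) (norm_nonneg x) hx
  exists_ne_one := by
    have hm1 := norm_intCast_eq_one_of_not_dvd hm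
    have hm0 : (m : ℚ_[p]) ≠ 0 := norm_ne_zero_iff.1 (hm1.trans_ne one_ne_zero)
    obtain ⟨x, hx, hψx⟩ := hψ.exists_ne_one
    exact ⟨(m : ℚ_[p])⁻¹ * x, by rwa [norm_mul, norm_inv, hm1, inv_one, one_mul],
      by rwa [mul_inv_cancel_left₀ hm0]⟩

noncomputable instance : MeasureSpace ℚ_[p] where
  volume := addHaarMeasure (unitClosedBall ℚ_[p])

instance : (volume : Measure ℚ_[p]).IsAddHaarMeasure := isAddHaarMeasure_addHaarMeasure _

instance : (volume : Measure (ℚ_[p] × ℚ_[p])).IsAddHaarMeasure := by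
  rw [volume_eq_prod]; infer_instance

theorem volume_closedBall_one : volume (closedBall (0 : ℚ_[p]) 1) = 1 := addHaarMeasure_self

theorem closedBall_p_eq_biUnion :
    closedBall (0 : ℚ_[p]) p = ⋃ i ∈ Finset.range p, closedBall ((i : ℚ_[p]) / p) 1 := by
  have hp : ‖(p : ℚ_[p])‖⁻¹ = p := by rw [norm_p, inv_inv]
  have hp0 : (p : ℚ_[p]) ≠ 0 := by exact_mod_cast (Fact.out : p.Prime).ne_zero
  ext v
  simp only [mem_iUnion, Finset.mem_range, mem_closedBall, dist_eq_norm, sub_zero, exists_prop]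
  constructor
  · intro hv
    have hpv : ‖(p : ℚ_[p]) * v‖ ≤ 1 := by
      rw [norm_mul, norm_p]; exact inv_mul_le_one_of_le₀ hv (Nat.cast_nonneg p)
    obtain ⟨i, hip, hi⟩ := PadicInt.exists_mem_range (⟨_, hpv⟩ : ℤ_[p])
    have hi' : ‖(p : ℚ_[p]) * v - i‖ < 1 := PadicInt.mem_nonunits.1 hi
    have hball : v - i / p ∈ ball (0 : ℚ_[p]) ((p : ℝ) ^ (0 + 1)) := by
      rw [mem_ball_zero_iff, pow_one, show v - i / p = (p : ℚ_[p])⁻¹ * (p * v - i) by field_simp,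
        norm_mul, norm_inv, hp]
      exact mul_lt_of_lt_one_right (by exact_mod_cast (Fact.out : p.Prime).pos) hi'
    rw [ball_pow_succ, pow_zero, mem_closedBall_zero_iff] at hball
    exact ⟨i, hip, hball⟩
  · rintro ⟨i, -, hi⟩
    calc ‖v‖ = ‖(v - i / p) + i / p‖ := by rw [sub_add_cancel]
      _ ≤ max ‖v - i / p‖ ‖(i : ℚ_[p]) / p‖ := nonarchimedean _ _
      _ ≤ p := by
        refine max_le (hi.trans one_lt_natCast_p.le) ?_
        rw [norm_div, div_eq_mul_inv, hp]
        exact mul_le_of_le_one_left (Nat.cast_nonneg p) (by simpa using norm_int_le_one (p := p) i)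

theorem pairwiseDisjoint_closedBall_div :
    (Finset.range p : Set ℕ).PairwiseDisjoint fun i ↦ closedBall ((i : ℚ_[p]) / p) 1 := by
  intro i hi j hj hij
  simp only [Finset.coe_range, mem_Iio] at hi hj
  rw [Function.onFun, Set.disjoint_left]
  intro v hvi hvj
  have hdvd : ¬ (p : ℤ) ∣ (i - j : ℤ) := fun hd ↦ by
    have := Int.eq_zero_of_abs_lt_dvd hd (by rw [abs_lt]; omega)
    omega
  have hdist : dist ((i : ℚ_[p]) / p) (j / p) = p := by
    rw [dist_eq_norm, ← sub_div, norm_div, norm_p, div_inv_eq_mul,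
      show (i : ℚ_[p]) - j = ((i - j : ℤ) : ℚ_[p]) by push_cast; ring,
      norm_intCast_eq_one_of_not_dvd hdvd, one_mul]
  have hle : dist ((i : ℚ_[p]) / p) (j / p) ≤ 1 :=
    (IsUltrametricDist.dist_triangle_max _ v _).trans (max_le (by rwa [dist_comm]) hvj)
  exact (hdist ▸ hle).not_gt one_lt_natCast_p

theorem volume_closedBall_p : volume (closedBall (0 : ℚ_[p]) p) = p := by
  rw [closedBall_p_eq_biUnion,
    measure_biUnion_finset pairwiseDisjoint_closedBall_div fun _ _ ↦ measurableSet_closedBall]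
  simp [addHaar_closedBall_center, volume_closedBall_one]

theorem volume_real_sphere_p : volume.real (sphere (0 : ℚ_[p]) p) = p - 1 := by
  have hball := ball_pow_succ (p := p) 0
  rw [zero_add, pow_one, pow_zero] at hball
  rw [← closedBall_sdiff_ball, measureReal_sdiff ball_subset_closedBall measurableSet_ball
    (isCompact_closedBall _ _).measure_lt_top.ne, hball, measureReal_def, measureReal_def,
    volume_closedBall_p, volume_closedBall_one]
  simp

theorem eq_volume {μ : Measure (ℚ_[p] × ℚ_[p])} [μ.IsAddHaarMeasure]
    (h : μ {x | ‖x.1‖ ≤ 1 ∧ ‖x.2‖ ≤ 1} = 1) : μ = volume := by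
  refine IsAddHaarMeasure.ext_closedBall ?_
  have hball : closedBall (0 : ℚ_[p]) 1 ×ˢ closedBall (0 : ℚ_[p]) 1 =
      {x | ‖x.1‖ ≤ 1 ∧ ‖x.2‖ ≤ 1} := by
    ext x
    simp
  rw [← Prod.mk_zero_zero, ← closedBall_prod_same, hball, h, ← hball, volume_eq_prod,
    prod_prod, volume_closedBall_one, one_mul]

theorem setIntegral_unimodularIsometry_preimage {e f g h : ℤ} (hd : ¬ (p : ℤ) ∣ e * h - g * f)
    (F : ℚ_[p] × ℚ_[p] → ℂ) (s : Set (ℚ_[p] × ℚ_[p])) :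
    ∫ x in unimodularIsometry p hd ⁻¹' s, F (unimodularIsometry p hd x) = ∫ z in s, F z :=
  ((unimodularIsometry p hd).measurePreserving_of_isAddHaarMeasure _).setIntegral_preimage_emb
    (unimodularIsometry p hd).toHomeomorph.measurableEmbedding F s

theorem setIntegral_unimodularIsometry_preimage_prod {e f g h : ℤ}
    (hd : ¬ (p : ℤ) ∣ e * h - g * f) (F : ℚ_[p] → ℂ) (A B : Set ℚ_[p]) :
    ∫ x in unimodularIsometry p hd ⁻¹' (A ×ˢ B), F ((g : ℚ_[p]) * x.1 + (h : ℚ_[p]) * x.2) =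
      volume.real A • ∫ v in B, F v :=
  (setIntegral_unimodularIsometry_preimage hd (fun z ↦ F z.2) _).trans <| by
    rw [volume_eq_prod, setIntegral_prod_fun_snd]

variable (p) in
def sphereNearLine (e f : ℤ) (R : ℝ) : Set (ℚ_[p] × ℚ_[p]) :=
  {x | ‖x‖ = R ∧ (e : ℚ_[p]) * x.1 + (f : ℚ_[p]) * x.2 ∈ ball 0 R}

theorem measurableSet_sphereNearLine (e f : ℤ) (R : ℝ) :
    MeasurableSet (sphereNearLine p e f R) :=
  (measurableSet_eq_fun measurable_norm measurable_const).inter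
    (measurableSet_ball.preimage (by fun_prop))

theorem sphereNearLine_subset_sphere (e f : ℤ) (R : ℝ) : sphereNearLine p e f R ⊆ sphere 0 R :=
  fun _ hx ↦ mem_sphere_zero_iff_norm.2 hx.1

theorem disjoint_sphereNearLine {e f g h : ℤ} (hd : ¬ (p : ℤ) ∣ e * h - g * f) (R : ℝ) :
    Disjoint (sphereNearLine p e f R) (sphereNearLine p g h R) := by
  rw [disjoint_left]
  rintro x ⟨hx, hef⟩ ⟨-, hgh⟩
  exact (max_lt (mem_ball_zero_iff.1 hef) (mem_ball_zero_iff.1 hgh)).ne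
    (((unimodularIsometry p hd).norm_map x).trans hx)

theorem Utot_eq_sphere_sdiff_iUnion {r : ℕ} (a b : Fin r → ℤ) (α : ℕ) :
    Utot p a b α =
      sphere 0 ((p : ℝ) ^ α) \ ⋃ i, sphereNearLine p (a i) (b i) ((p : ℝ) ^ α) := by
  ext x
  simp only [Utot, sphereNearLine, mem_sdiff, mem_sphere_zero_iff_norm, mem_iUnion,
    mem_ofPred_eq, mem_ball_zero_iff, not_exists, not_and, not_lt, Prod.norm_def]
  refine and_congr_right fun hx ↦ forall_congr' fun i ↦ ⟨fun hi _ ↦ hi.ge, fun hi ↦ ?_⟩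
  exact ((norm_intCast_mul_add_le _ _ x).trans hx.le).antisymm (hi hx)

namespace IsStandardAddChar

variable {ψ : ℚ_[p] → ℂ} (hψ : IsStandardAddChar p ψ)
include hψ

theorem setIntegral_closedBall_one : ∫ v in closedBall 0 1, ψ v = 1 := by
  rw [setIntegral_congr_fun measurableSet_closedBall
      fun v hv ↦ hψ.eq_one_of_norm_le_one v (mem_closedBall_zero_iff.1 hv),
    setIntegral_const, measureReal_def, volume_closedBall_one]
  simp

theorem setIntegral_closedBall_pow_succ (n : ℕ) :
    ∫ v in closedBall 0 ((p : ℝ) ^ (n + 1)), ψ v = 0 := by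
  obtain ⟨t, ht, hψt⟩ := hψ.exists_ne_one
  refine setIntegral_closedBall_eq_zero_of_ne_one _ hψ.map_add (ht.trans ?_) hψt
  exact le_self_pow₀ one_lt_natCast_p.le n.succ_ne_zero

theorem setIntegral_ball_pow_succ (n : ℕ) :
    ∫ v in ball 0 ((p : ℝ) ^ (n + 1)), ψ v = if n = 0 then 1 else 0 := by
  rw [ball_pow_succ]
  rcases n with _ | n
  · simpa using hψ.setIntegral_closedBall_one
  · simpa using hψ.setIntegral_closedBall_pow_succ n

theorem setIntegral_sphere_pow_succ (n : ℕ) :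
    ∫ v in sphere 0 ((p : ℝ) ^ (n + 1)), ψ v = if n = 0 then -1 else 0 := by
  rw [← closedBall_sdiff_ball, setIntegral_sdiff measurableSet_ball
    (hψ.continuous.continuousOn.integrableOn_compact (isCompact_closedBall _ _))
    ball_subset_closedBall, hψ.setIntegral_closedBall_pow_succ, hψ.setIntegral_ball_pow_succ]
  split_ifs <;> simp

theorem setIntegral_sphere_prod (n : ℕ) :
    ∫ z in sphere (0 : ℚ_[p] × ℚ_[p]) ((p : ℝ) ^ (n + 1)), ψ z.2 = if n = 0 then -1 else 0 := by
  have hint : IntegrableOn (fun z : ℚ_[p] × ℚ_[p] ↦ ψ z.2) (closedBall 0 ((p : ℝ) ^ (n + 1))) :=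
    (hψ.continuous.comp continuous_snd).continuousOn.integrableOn_compact (isCompact_closedBall _ _)
  rw [← closedBall_sdiff_ball, setIntegral_sdiff measurableSet_ball hint ball_subset_closedBall,
    ← Prod.mk_zero_zero, ← closedBall_prod_same, ← ball_prod_same, volume_eq_prod,
    setIntegral_prod_fun_snd, setIntegral_prod_fun_snd, hψ.setIntegral_closedBall_pow_succ,
    hψ.setIntegral_ball_pow_succ, ball_pow_succ]
  rcases n with _ | n
  · simp [measureReal_def, volume_closedBall_one]
  · simp

theorem setIntegral_sphere_unimodular {e f g h : ℤ} (hd : ¬ (p : ℤ) ∣ e * h - g * f) (n : ℕ) :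
    ∫ x in sphere (0 : ℚ_[p] × ℚ_[p]) ((p : ℝ) ^ (n + 1)),
      ψ ((g : ℚ_[p]) * x.1 + (h : ℚ_[p]) * x.2) = if n = 0 then -1 else 0 := by
  have hS : sphere (0 : ℚ_[p] × ℚ_[p]) ((p : ℝ) ^ (n + 1)) =
      unimodularIsometry p hd ⁻¹' sphere 0 ((p : ℝ) ^ (n + 1)) := by
    rw [LinearIsometryEquiv.preimage_sphere, map_zero]
  rw [hS]
  exact (setIntegral_unimodularIsometry_preimage hd (fun z ↦ ψ z.2) _).trans
    (hψ.setIntegral_sphere_prod n)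

theorem setIntegral_Uab {e f g h : ℤ} (hd : ¬ (p : ℤ) ∣ e * h - g * f) {α β : ℕ} (hβ : 1 ≤ β)
    (hβα : β < α) : ∫ x in Uab p e f α β, ψ ((g : ℚ_[p]) * x.1 + (h : ℚ_[p]) * x.2) = 0 := by
  obtain ⟨n, rfl⟩ : ∃ n, α = n + 1 + 1 := ⟨α - 2, by omega⟩
  have hU : Uab p e f (n + 1 + 1) β = unimodularIsometry p hd ⁻¹'
      (sphere 0 ((p : ℝ) ^ (n + 1 + 1 - β)) ×ˢ sphere 0 ((p : ℝ) ^ (n + 1 + 1))) := by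
    rw [← setOf_norm_eq_and_fst_mem (unimodularIsometry p hd).norm_map
      (sphere_subset_ball (pow_lt_pow_right₀ one_lt_natCast_p (by omega)))]
    ext x
    simp [Uab, unimodularIsometry_apply, Prod.norm_def]
  rw [hU, setIntegral_unimodularIsometry_preimage_prod, hψ.setIntegral_sphere_pow_succ,
    if_neg n.succ_ne_zero, smul_zero]

theorem setIntegral_Ua {e f g h : ℤ} (hd : ¬ (p : ℤ) ∣ e * h - g * f) {α : ℕ} (hα : 1 ≤ α) :
    ∫ x in Ua p e f α, ψ ((g : ℚ_[p]) * x.1 + (h : ℚ_[p]) * x.2) = if α = 1 then -1 else 0 := by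
  obtain ⟨n, rfl⟩ : ∃ n, α = n + 1 := ⟨α - 1, by omega⟩
  have hU : Ua p e f (n + 1) = unimodularIsometry p hd ⁻¹'
      (closedBall 0 1 ×ˢ sphere 0 ((p : ℝ) ^ (n + 1))) := by
    rw [← setOf_norm_eq_and_fst_mem (unimodularIsometry p hd).norm_map
      (closedBall_subset_ball (one_lt_pow₀ one_lt_natCast_p n.succ_ne_zero))]
    ext x
    simp [Ua, unimodularIsometry_apply, Prod.norm_def]
  rw [hU, setIntegral_unimodularIsometry_preimage_prod, hψ.setIntegral_sphere_pow_succ,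
    measureReal_def, volume_closedBall_one]
  simp

theorem setIntegral_sphereNearLine_of_ne {e f g h : ℤ} (hd : ¬ (p : ℤ) ∣ e * h - g * f)
    (n : ℕ) :
    ∫ x in sphereNearLine p e f ((p : ℝ) ^ (n + 1)), ψ ((g : ℚ_[p]) * x.1 + (h : ℚ_[p]) * x.2) =
      if n = 0 then -1 else 0 := by
  have hB : sphereNearLine p e f ((p : ℝ) ^ (n + 1)) = _ :=
    setOf_norm_eq_and_fst_mem (T := unimodularIsometry p hd) (LinearIsometryEquiv.norm_map _)
      subset_rfl
  rw [hB, setIntegral_unimodularIsometry_preimage_prod, hψ.setIntegral_sphere_pow_succ,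
    ball_pow_succ]
  rcases n with _ | n
  · simp [measureReal_def, volume_closedBall_one]
  · simp

theorem setIntegral_sphereNearLine_self {e f g h : ℤ} (hd : ¬ (p : ℤ) ∣ e * h - g * f)
    (n : ℕ) :
    ∫ x in sphereNearLine p g h ((p : ℝ) ^ (n + 1)), ψ ((g : ℚ_[p]) * x.1 + (h : ℚ_[p]) * x.2) =
      if n = 0 then (p : ℂ) - 1 else 0 := by
  have hB : sphereNearLine p g h ((p : ℝ) ^ (n + 1)) = _ :=
    setOf_norm_eq_and_snd_mem (T := unimodularIsometry p hd) (LinearIsometryEquiv.norm_map _)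
      subset_rfl
  rw [hB, setIntegral_unimodularIsometry_preimage_prod, hψ.setIntegral_ball_pow_succ]
  rcases n with _ | n
  · simp [volume_real_sphere_p]
  · simp

theorem setIntegral_Utot {r : ℕ} {a b : Fin r → ℤ}
    (hpS : ∀ i j, i ≠ j → ¬ (p : ℤ) ∣ a i * b j - a j * b i) {k : Fin r}
    (hk : IsCoprime (a k) (b k)) {α : ℕ} (hα : 1 ≤ α) :
    ∫ x in Utot p a b α, ψ ((a k : ℚ_[p]) * x.1 + (b k : ℚ_[p]) * x.2) =
      if α = 1 then -((p : ℂ) + 1 - r) else 0 := by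
  obtain ⟨n, rfl⟩ : ∃ n, α = n + 1 := ⟨α - 1, by omega⟩
  obtain ⟨u, v, huv⟩ := hk
  have hd : ¬ (p : ℤ) ∣ v * b k - a k * (-u) := by
    rw [show v * b k - a k * (-u) = 1 by linear_combination huv]
    exact_mod_cast (Fact.out : p.Prime).not_dvd_one
  set R := (p : ℝ) ^ (n + 1)
  have hint : IntegrableOn (fun x : ℚ_[p] × ℚ_[p] ↦ ψ ((a k : ℚ_[p]) * x.1 + (b k : ℚ_[p]) * x.2))
      (sphere 0 R) :=
    (hψ.continuous.comp (by fun_prop)).continuousOn.integrableOn_compact (isCompact_sphere _ _)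
  have hB (i : Fin r) : ∫ x in sphereNearLine p (a i) (b i) R,
      ψ ((a k : ℚ_[p]) * x.1 + (b k : ℚ_[p]) * x.2) =
      (if n = 0 then -1 else 0) + if i = k then (if n = 0 then (p : ℂ) else 0) else 0 := by
    rcases eq_or_ne i k with rfl | hik
    · rw [hψ.setIntegral_sphereNearLine_self hd, if_pos rfl]
      split_ifs <;> ring
    · rw [hψ.setIntegral_sphereNearLine_of_ne (hpS i k hik), if_neg hik, add_zero]
  rw [Utot_eq_sphere_sdiff_iUnion,
    setIntegral_sdiff (.iUnion fun _ ↦ measurableSet_sphereNearLine _ _ _) hint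
      (iUnion_subset fun _ ↦ sphereNearLine_subset_sphere _ _ _),
    integral_iUnion_fintype (fun _ ↦ measurableSet_sphereNearLine _ _ _)
      (fun i j hij ↦ disjoint_sphereNearLine (hpS i j hij) R)
      (fun _ ↦ hint.mono_set (sphereNearLine_subset_sphere _ _ _)),
    hψ.setIntegral_sphere_unimodular hd, Finset.sum_congr rfl fun i _ ↦ hB i]
  rcases n with _ | n
  · simp only [↓reduceIte, Finset.sum_add_distrib, Finset.sum_const, Finset.card_univ,
      Fintype.card_fin, nsmul_eq_mul, Finset.sum_ite_eq', Finset.mem_univ]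
    ring
  · simp

end IsStandardAddChar

end Padic

open Padic

theorem stmt12_general (r : ℕ) (a b : Fin r → ℤ)
    (hprim : ∀ k, Int.gcd (a k) (b k) = 1)
    (p : ℕ) [Fact p.Prime]
    (hpS : ∀ j k, j ≠ k → ¬ ((p : ℤ) ∣ (a j * b k - a k * b j)))
    (μ : Measure (ℚ_[p] × ℚ_[p])) (hμ : μ.IsAddHaarMeasure)
    (hμ1 : μ {x | ‖x.1‖ ≤ 1 ∧ ‖x.2‖ ≤ 1} = 1)
    (ψ : ℚ_[p] → ℂ) (hψcont : Continuous ψ)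
    (hψadd : ∀ x y : ℚ_[p], ψ (x + y) = ψ x * ψ y)
    (hψtriv : ∀ x : ℚ_[p], ‖x‖ ≤ 1 → ψ x = 1)
    (hψnontriv : ∃ x : ℚ_[p], ‖x‖ ≤ (p : ℝ) ∧ ψ x ≠ 1)
    (k : Fin r) (c : ℤ × ℤ)
    (hspec : c.1 * b k = c.2 * a k)
    (hcp : ¬ ((p : ℤ) ∣ c.1 ∧ (p : ℤ) ∣ c.2)) :
    (∀ j, j ≠ k → ∀ α β : ℕ, 1 ≤ β → β < α →
      ∫ x in Uab p (a j) (b j) α β,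
        ψ ((c.1 : ℚ_[p]) * x.1 + (c.2 : ℚ_[p]) * x.2) ∂μ = 0) ∧
    (∀ j, j ≠ k →
      (∫ x in Ua p (a j) (b j) 1,
        ψ ((c.1 : ℚ_[p]) * x.1 + (c.2 : ℚ_[p]) * x.2) ∂μ = -1) ∧
      (∀ α : ℕ, 2 ≤ α →
        ∫ x in Ua p (a j) (b j) α,
          ψ ((c.1 : ℚ_[p]) * x.1 + (c.2 : ℚ_[p]) * x.2) ∂μ = 0)) ∧
    ((∫ x in Utot p a b 1,
        ψ ((c.1 : ℚ_[p]) * x.1 + (c.2 : ℚ_[p]) * x.2) ∂μ =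
          -((p : ℂ) + 1 - (r : ℂ))) ∧
     (∀ α : ℕ, 2 ≤ α →
        ∫ x in Utot p a b α,
          ψ ((c.1 : ℚ_[p]) * x.1 + (c.2 : ℚ_[p]) * x.2) ∂μ = 0)) := by
  obtain rfl := eq_volume hμ1
  have hk : IsCoprime (a k) (b k) := Int.isCoprime_iff_gcd_eq_one.2 (hprim k)
  obtain ⟨m, hm₁, hm₂⟩ := hk.exists_eq_mul_of_mul_eq_mul hspec
  have hm : ¬ (p : ℤ) ∣ m := fun h ↦ hcp ⟨hm₁ ▸ h.mul_right _, hm₂ ▸ h.mul_right _⟩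
  have hχ := (IsStandardAddChar.mk hψcont hψadd hψtriv hψnontriv).comp_intCast_mul hm
  have hc (x : ℚ_[p] × ℚ_[p]) : ψ ((c.1 : ℚ_[p]) * x.1 + (c.2 : ℚ_[p]) * x.2) =
      ψ (m * ((a k : ℚ_[p]) * x.1 + (b k : ℚ_[p]) * x.2)) := by
    rw [hm₁, hm₂]
    congr 1
    push_cast
    ring
  simp only [hc]
  refine ⟨fun j hj α β hβ hβα ↦ hχ.setIntegral_Uab (hpS j k hj) hβ hβα,
    fun j hj ↦ ⟨(hχ.setIntegral_Ua (hpS j k hj) le_rfl).trans (if_pos rfl),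
      fun α hα ↦ (hχ.setIntegral_Ua (hpS j k hj) (by omega)).trans (if_neg (by omega))⟩,
    (hχ.setIntegral_Utot hpS hk le_rfl).trans (if_pos rfl),
    fun α hα ↦ (hχ.setIntegral_Utot hpS hk (by omega)).trans (if_neg (by omega))⟩

/-- Integrals of a character special for `ℓ_k` over the pieces
`U_j(α,β)`, `U_j(α)` (`j ≠ k`) and `U(α)` at a prime `p` of good reduction. -/
theorem stmt12 (r : ℕ) (hr : 1 ≤ r) (a b : Fin r → ℤ)
    (hprim : ∀ k, Int.gcd (a k) (b k) = 1)
    (hnonprop : ∀ j k, j ≠ k → a j * b k - a k * b j ≠ 0)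
    (p : ℕ) [Fact p.Prime]
    (hpS : ∀ j k, j ≠ k → ¬ ((p : ℤ) ∣ (a j * b k - a k * b j)))
    (μ : Measure (ℚ_[p] × ℚ_[p])) (hμ : μ.IsAddHaarMeasure)
    (hμ1 : μ {x | ‖x.1‖ ≤ 1 ∧ ‖x.2‖ ≤ 1} = 1)
    (ψ : ℚ_[p] → ℂ) (hψcont : Continuous ψ)
    (hψadd : ∀ x y : ℚ_[p], ψ (x + y) = ψ x * ψ y)
    (hψabs : ∀ x : ℚ_[p], ‖ψ x‖ = 1)
    (hψtriv : ∀ x : ℚ_[p], ‖x‖ ≤ 1 → ψ x = 1)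
    (hψnontriv : ∃ x : ℚ_[p], ‖x‖ ≤ (p : ℝ) ∧ ψ x ≠ 1)
    (k : Fin r) (c : ℤ × ℤ) (hc0 : c ≠ 0)
    (hspec : c.1 * b k = c.2 * a k)
    (hcp : ¬ ((p : ℤ) ∣ c.1 ∧ (p : ℤ) ∣ c.2)) :
    (∀ j, j ≠ k → ∀ α β : ℕ, 1 ≤ β → β < α →
      ∫ x in Uab p (a j) (b j) α β,
        ψ ((c.1 : ℚ_[p]) * x.1 + (c.2 : ℚ_[p]) * x.2) ∂μ = 0) ∧
    (∀ j, j ≠ k →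
      (∫ x in Ua p (a j) (b j) 1,
        ψ ((c.1 : ℚ_[p]) * x.1 + (c.2 : ℚ_[p]) * x.2) ∂μ = -1) ∧
      (∀ α : ℕ, 2 ≤ α →
        ∫ x in Ua p (a j) (b j) α,
          ψ ((c.1 : ℚ_[p]) * x.1 + (c.2 : ℚ_[p]) * x.2) ∂μ = 0)) ∧
    ((∫ x in Utot p a b 1,
        ψ ((c.1 : ℚ_[p]) * x.1 + (c.2 : ℚ_[p]) * x.2) ∂μ =
          -((p : ℂ) + 1 - (r : ℂ))) ∧
     (∀ α : ℕ, 2 ≤ α →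
        ∫ x in Utot p a b α,
          ψ ((c.1 : ℚ_[p]) * x.1 + (c.2 : ℚ_[p]) * x.2) ∂μ = 0)) :=
  stmt12_general r a b hprim p hpS μ hμ hμ1 ψ hψcont hψadd hψtriv hψnontriv k c hspec hcp
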